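/- Let λ_1,…,λ_N be positive reals, and for α > 0 set D(α) = (1/(2N)) Σ_{k=1}^{N} ( √(λ_k² + λ_k α) − λ_k ) and R(α) = (1/N) Σ_{k=1}^{N} log( (√(λ_k + α) + √λ_k) / √α ). Define R^⊥ : (0,∞) → ℝ by R^⊥(D(α)) = R(α) (well defined since D is a strictly increasing bijection of (0,∞) onto itself). Then R^⊥ is strictly decreasing and convex on (0,∞). -/

import Mathlib

/-!
Summand by summand, `d/dα log((√(λ+α) + √λ)/√α) = -(1/α) · d/dα (√(λ² + λα) - λ)`, hence
`R' = -(2/α) D'` with `D' > 0`. So along the curve `α ↦ (D α, R α)` the graph of `R^⊥` has slope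
`-2/α`: negative, and increasing in `D` since `D` is increasing. Cauchy's mean value theorem
turns this into the same statement about chord slopes of `R^⊥`, which gives strict decrease and
convexity.
-/

open Real Set

section Reparametrization

variable {D R P D' g : ℝ → ℝ}

lemma exists_sub_eq_neg_mul_sub_of_hasDerivAt {a b : ℝ} (hab : a < b)
    (hD : ∀ x ∈ Icc a b, HasDerivAt D (D' x) x) (hD' : ∀ x ∈ Ioo a b, 0 < D' x)
    (hR : ∀ x ∈ Icc a b, HasDerivAt R (-g x * D' x) x) :
    ∃ c ∈ Ioo a b, R b - R a = -g c * (D b - D a) := by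
  obtain ⟨c, hc, hcauchy⟩ := exists_ratio_hasDerivAt_eq_ratio_slope R (fun x => -g x * D' x) hab
    (fun x hx => (hR x hx).continuousAt.continuousWithinAt)
    (fun x hx => hR x (Ioo_subset_Icc_self hx)) D D'
    (fun x hx => (hD x hx).continuousAt.continuousWithinAt)
    (fun x hx => hD x (Ioo_subset_Icc_self hx))
  refine ⟨c, hc, mul_right_cancel₀ (hD' c hc).ne' ?_⟩
  linear_combination -hcauchy

theorem strictAntiOn_and_convexOn_of_comp_eq
    (hD : ∀ x, 0 < x → HasDerivAt D (D' x) x) (hD' : ∀ x, 0 < x → 0 < D' x)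
    (hR : ∀ x, 0 < x → HasDerivAt R (-g x * D' x) x)
    (hg : ∀ x, 0 < x → 0 < g x) (hg_anti : AntitoneOn g (Ioi 0))
    (hsurj : SurjOn D (Ioi 0) (Ioi 0)) (hP : ∀ x, 0 < x → P (D x) = R x) :
    StrictAntiOn P (Ioi 0) ∧ ConvexOn ℝ (Ioi 0) P := by
  have hmono : StrictMonoOn D (Ioi 0) := by
    refine strictMonoOn_of_hasDerivWithinAt_pos (f' := D') (convex_Ioi 0)
      (fun x hx => (hD x hx).continuousAt.continuousWithinAt) (fun x hx => ?_) (fun x hx => ?_)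
    · rw [interior_Ioi] at hx
      exact (hD x hx).hasDerivWithinAt
    · rw [interior_Ioi] at hx
      exact hD' x hx
  have hslope : ∀ a b, 0 < a → a < b →
      ∃ c ∈ Ioo a b, P (D b) - P (D a) = -g c * (D b - D a) := by
    intro a b ha hab
    rw [hP a ha, hP b (ha.trans hab)]
    exact exists_sub_eq_neg_mul_sub_of_hasDerivAt hab
      (fun x hx => hD x (ha.trans_le hx.1)) (fun x hx => hD' x (ha.trans hx.1))
      (fun x hx => hR x (ha.trans_le hx.1))
  constructor
  · intro x hx y hy hxy
    obtain ⟨a, ha, rfl⟩ := hsurj hx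
    obtain ⟨b, hb, rfl⟩ := hsurj hy
    have hab : a < b := (hmono.lt_iff_lt ha hb).1 hxy
    obtain ⟨c, hc, hPc⟩ := hslope a b ha hab
    nlinarith [hg c (ha.trans hc.1)]
  · refine convexOn_of_slope_mono_adjacent (convex_Ioi 0) fun {x y z} hx hz hxy hyz => ?_
    obtain ⟨a, ha, rfl⟩ := hsurj hx
    obtain ⟨b, hb, rfl⟩ := hsurj (show y ∈ Ioi 0 from (mem_Ioi.1 hx).trans hxy)
    obtain ⟨c, hc, rfl⟩ := hsurj hz
    have hab : a < b := (hmono.lt_iff_lt ha hb).1 hxy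
    have hbc : b < c := (hmono.lt_iff_lt hb hc).1 hyz
    obtain ⟨c₁, hc₁, hP₁⟩ := hslope a b ha hab
    obtain ⟨c₂, hc₂, hP₂⟩ := hslope b c hb hbc
    rw [hP₁, hP₂, mul_div_cancel_right₀ _ (sub_pos.2 hxy).ne',
      mul_div_cancel_right₀ _ (sub_pos.2 hyz).ne', neg_le_neg_iff]
    exact hg_anti (mem_Ioi.2 (ha.trans hc₁.1)) (mem_Ioi.2 (hb.trans hc₂.1))
      (hc₁.2.trans hc₂.1).le

end Reparametrization

lemma sqrt_sq_add_mul_sub_eq {l t : ℝ} (hl : 0 < l) (ht : 0 ≤ t) :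
    √(l ^ 2 + l * (2 * t + t ^ 2 / l)) - l = t := by
  rw [show l ^ 2 + l * (2 * t + t ^ 2 / l) = (l + t) ^ 2 by field_simp; ring,
    Real.sqrt_sq (by linarith)]
  ring

lemma hasDerivAt_sqrt_sq_add_mul_sub {l x : ℝ} (hl : 0 < l) (hx : 0 < l + x) :
    HasDerivAt (fun y => √(l ^ 2 + l * y) - l) (√l / (2 * √(l + x))) x := by
  have hsq : √(l ^ 2 + l * x) = √l * √(l + x) := by
    rw [← Real.sqrt_mul hl.le]; ring_nf
  have hpos : 0 < l ^ 2 + l * x := by nlinarith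
  have h := (((hasDerivAt_id x).const_mul l).const_add (l ^ 2)).sqrt hpos.ne' |>.sub_const l
  refine h.congr_deriv ?_
  have hl' : 0 < √l := Real.sqrt_pos.2 hl
  have hx' : 0 < √(l + x) := Real.sqrt_pos.2 hx
  rw [id, hsq]
  field_simp
  simp [Real.sq_sqrt hl.le]

lemma hasDerivAt_log_sqrt_add_sqrt_div_sqrt {l x : ℝ} (hl : 0 ≤ l) (hx : 0 < x) :
    HasDerivAt (fun y => Real.log ((√(l + y) + √l) / √y)) (-(√l / (2 * √(l + x))) / x) x := by
  have hlx : 0 < l + x := by linarith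
  have hs : 0 < √(l + x) := Real.sqrt_pos.2 hlx
  have hx' : 0 < √x := Real.sqrt_pos.2 hx
  have hsum : 0 < √(l + x) + √l := by positivity
  have hnum : HasDerivAt (fun y => Real.log (√(l + y) + √l))
      (1 / (2 * √(l + x)) / (√(l + x) + √l)) x := by
    have := (((hasDerivAt_id x).const_add l).sqrt hlx.ne').add_const √l
    simpa using this.log hsum.ne'
  have hden : HasDerivAt (fun y => Real.log √y) (1 / (2 * √x) / √x) x :=
    (Real.hasDerivAt_sqrt hx.ne').log hx'.ne'
  have hsplit : (fun y => Real.log ((√(l + y) + √l) / √y)) =ᶠ[nhds x]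
      fun y => Real.log (√(l + y) + √l) - Real.log √y := by
    filter_upwards [lt_mem_nhds hx] with y hy
    exact Real.log_div (by positivity) (Real.sqrt_pos.2 hy).ne'
  refine ((hnum.sub hden).congr_of_eventuallyEq hsplit).congr_deriv ?_
  have hss : √(l + x) ^ 2 = l + x := Real.sq_sqrt hlx.le
  have hll : √l ^ 2 = l := Real.sq_sqrt hl
  have hxx : √x ^ 2 = x := Real.sq_sqrt hx.le
  field_simp
  linear_combination (√l * √(l + x) + √l ^ 2 + x) * hxx - x * hss + x * hll

noncomputable section GaussianSource

variable {N : ℕ} (lam : Fin N → ℝ)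

def distortion (a : ℝ) : ℝ :=
  (1 / (2 * N)) * ∑ k, (√(lam k ^ 2 + lam k * a) - lam k)

def rate (a : ℝ) : ℝ :=
  (1 / N) * ∑ k, Real.log ((√(lam k + a) + √(lam k)) / √a)

def distortionDeriv (a : ℝ) : ℝ :=
  (1 / (2 * N)) * ∑ k, √(lam k) / (2 * √(lam k + a))

variable {lam}

lemma hasDerivAt_distortion (hlam : ∀ k, 0 < lam k) {a : ℝ} (ha : 0 < a) :
    HasDerivAt (distortion lam) (distortionDeriv lam a) a :=
  (HasDerivAt.fun_sum fun k _ =>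
    hasDerivAt_sqrt_sq_add_mul_sub (hlam k) (by linarith [hlam k])).const_mul _

lemma hasDerivAt_rate (hlam : ∀ k, 0 ≤ lam k) {a : ℝ} (ha : 0 < a) :
    HasDerivAt (rate lam) (-(2 / a) * distortionDeriv lam a) a := by
  refine ((HasDerivAt.fun_sum fun k _ =>
    hasDerivAt_log_sqrt_add_sqrt_div_sqrt (hlam k) ha).const_mul _).congr_deriv ?_
  rw [distortionDeriv, ← Finset.sum_div, Finset.sum_neg_distrib]
  ring

lemma distortionDeriv_pos (hN : 0 < N) (hlam : ∀ k, 0 < lam k) {a : ℝ} (ha : 0 < a) :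
    0 < distortionDeriv lam a := by
  have : Nonempty (Fin N) := ⟨⟨0, hN⟩⟩
  have hterm : ∀ k, 0 < √(lam k) / (2 * √(lam k + a)) := fun k => by
    have := hlam k
    have : 0 < lam k + a := by linarith
    positivity
  unfold distortionDeriv
  have := Finset.sum_pos (fun k _ => hterm k) Finset.univ_nonempty
  positivity

lemma continuous_distortion : Continuous (distortion lam) := by
  unfold distortion
  fun_prop

lemma distortion_zero (hlam : ∀ k, 0 ≤ lam k) : distortion lam 0 = 0 := by
  simp [distortion, Real.sqrt_sq (hlam _)]

lemma surjOn_distortion (hN : 0 < N) (hlam : ∀ k, 0 < lam k) :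
    SurjOn (distortion lam) (Ioi 0) (Ioi 0) := by
  intro y (hy : 0 < y)
  set k₀ : Fin N := ⟨0, hN⟩
  set t := 4 * N * y
  have hN' : (0 : ℝ) < N := by exact_mod_cast hN
  have ht : 0 ≤ t := by positivity
  have hM₀ : 0 ≤ 2 * t + t ^ 2 / lam k₀ := by have := hlam k₀; positivity
  -- `M` is chosen so that the `k₀`-th summand of `distortion lam M` equals `t`
  set M := 2 * t + t ^ 2 / lam k₀
  have hM : y < distortion lam M := by
    have hterm : ∀ k, 0 ≤ √(lam k ^ 2 + lam k * M) - lam k := fun k => by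
      have := hlam k
      rw [sub_nonneg, Real.le_sqrt (hlam k).le (by positivity)]
      nlinarith
    have hsingle := Finset.single_le_sum (fun k _ => hterm k) (Finset.mem_univ k₀)
    rw [sqrt_sq_add_mul_sub_eq (hlam k₀) ht] at hsingle
    rw [distortion]
    calc y < (1 / (2 * N)) * t := by field_simp; nlinarith
      _ ≤ _ := by gcongr
  obtain ⟨a, ha, hay⟩ := intermediate_value_Ioo hM₀
    continuous_distortion.continuousOn ⟨(distortion_zero fun k => (hlam k).le).symm ▸ hy, hM⟩
  exact ⟨a, ha.1, hay⟩

end GaussianSource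

/-- The function `R^⊥` defined on `(0,∞)` by `R^⊥(D(α)) = R(α)` (any
function satisfying this relation) is strictly decreasing and convex on `(0,∞)`. -/
theorem stmt11 {N : ℕ} (hN : 0 < N) (lam : Fin N → ℝ) (hlam : ∀ k, 0 < lam k)
    (Rp : ℝ → ℝ)
    (hRp : ∀ alpha : ℝ, 0 < alpha →
      Rp ((1 / (2 * N)) * ∑ k, (Real.sqrt (lam k ^ 2 + lam k * alpha) - lam k))
        = (1 / N) * ∑ k,
            Real.log ((Real.sqrt (lam k + alpha) + Real.sqrt (lam k)) / Real.sqrt alpha)) :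
    StrictAntiOn Rp (Set.Ioi 0) ∧ ConvexOn ℝ (Set.Ioi 0) Rp :=
  strictAntiOn_and_convexOn_of_comp_eq (D := distortion lam) (R := rate lam)
    (fun _ ha => hasDerivAt_distortion hlam ha) (fun _ ha => distortionDeriv_pos hN hlam ha)
    (fun _ ha => hasDerivAt_rate (fun k => (hlam k).le) ha) (fun _ ha => div_pos two_pos ha)
    (fun _ ha _ _ hab => div_le_div_of_nonneg_left zero_le_two ha hab)
    (surjOn_distortion hN hlam) hRp
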